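/- Let X ⊆ ℝ^n and Y ⊆ ℝ^m be closed cones with vertex at the origin, i.e. closed sets such that t·x ∈ X for all t ≥ 0 and x ∈ X, and likewise for Y. If there exist ε, δ > 0 and a bijection φ : {x ∈ X : ‖x‖ ≤ ε} → {y ∈ Y : ‖y‖ ≤ δ} with φ(0) = 0 such that φ and φ⁻¹ are Lipschitz for the Euclidean distance, then there exists a bijection Φ : X → Y such that Φ and Φ⁻¹ are Lipschitz for the Euclidean distance. (Cones that are outer bi-Lipschitz homeomorphic as germs at their vertices are globally outer bi-Lipschitz homeomorphic.) -/

import Mathlib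

/-
Rescaling a germ `φ` at the vertex by `φₜ x = t • φ (t⁻¹ • x)` preserves both Lipschitz
constants, and for `t` large enough `φₜ` is defined on any given bounded part of the cone `X`.
Taking the limit of `φₜ` along an ultrafilter on `ℝ` finer than `atTop` (pointwise bounded,
hence convergent by properness) gives a map `Φ : X → Y` with the same upper Lipschitz constant;
the same limit for the inverse germ `ψ` gives a Lipschitz `Ψ : Y → X`. The two are mutually
inverse because `φₜ ∘ ψₜ = id` near any given point for large `t` and the `φₜ` are
equi-Lipschitz, so `Φ⁻¹ = Ψ` is Lipschitz.
-/

open Filter Topology MvPolynomial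

/-- The tangent cone at infinity of a subset `A` of a normed space: `v` is a tangent
vector at infinity if there are points `x i ∈ A` with `‖x i‖ → ∞` and positive reals
`t i` with `x i / t i → v`. -/
def TangentConeAtInfty {E : Type*} [NormedAddCommGroup E] [NormedSpace ℝ E]
    (A : Set E) : Set E :=
  {v | ∃ (x : ℕ → E) (t : ℕ → ℝ), (∀ i, x i ∈ A) ∧ (∀ i, 0 < t i) ∧
    Tendsto (fun i => ‖x i‖) atTop atTop ∧
    Tendsto (fun i => (t i)⁻¹ • x i) atTop (𝓝 v)}

/-- `X` and `Y` are outer bi-Lipschitz homeomorphic at infinity: there are compact sets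
`K`, `K'` and a bijection `φ : X \ K → Y \ K'` which is Lipschitz with Lipschitz inverse,
with respect to the Euclidean (outer) distance. -/
def OuterBiLipAtInfty {E F : Type*} [NormedAddCommGroup E] [NormedAddCommGroup F]
    (X : Set E) (Y : Set F) : Prop :=
  ∃ (K : Set E) (K' : Set F) (φ : E → F),
    IsCompact K ∧ IsCompact K' ∧ Set.BijOn φ (X \ K) (Y \ K') ∧
    (∃ C > (0:ℝ), ∀ a ∈ X \ K, ∀ b ∈ X \ K, dist (φ a) (φ b) ≤ C * dist a b) ∧
    (∃ c > (0:ℝ), ∀ a ∈ X \ K, ∀ b ∈ X \ K, dist a b ≤ c * dist (φ a) (φ b))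

/-- The germs `(X,0)` and `(Y,0)` are outer bi-Lipschitz homeomorphic: there are
`ε, δ > 0` and a bijection `φ : X ∩ B̄_ε(0) → Y ∩ B̄_δ(0)` with `φ 0 = 0` which is
Lipschitz with Lipschitz inverse for the Euclidean (outer) distance. -/
def OuterBiLipGerm {E F : Type*} [NormedAddCommGroup E] [NormedAddCommGroup F]
    (X : Set E) (Y : Set F) : Prop :=
  ∃ ε > (0:ℝ), ∃ δ > (0:ℝ), ∃ φ : E → F,
    Set.BijOn φ (X ∩ Metric.closedBall 0 ε) (Y ∩ Metric.closedBall 0 δ) ∧ φ 0 = 0 ∧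
    (∃ C > (0:ℝ), ∀ a ∈ X ∩ Metric.closedBall 0 ε, ∀ b ∈ X ∩ Metric.closedBall 0 ε,
      dist (φ a) (φ b) ≤ C * dist a b) ∧
    (∃ c > (0:ℝ), ∀ a ∈ X ∩ Metric.closedBall 0 ε, ∀ b ∈ X ∩ Metric.closedBall 0 ε,
      dist a b ≤ c * dist (φ a) (φ b))

/-- The zero set in `ℂⁿ` (with the Euclidean norm) of a polynomial. -/
noncomputable def mvZeroSet {n : ℕ} (f : MvPolynomial (Fin n) ℂ) :
    Set (EuclideanSpace ℂ (Fin n)) :=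
  {x | MvPolynomial.eval (x : Fin n → ℂ) f = 0}

open Set

def IsCone {E : Type*} [AddCommGroup E] [Module ℝ E] (X : Set E) : Prop :=
  ∀ t : ℝ, 0 ≤ t → ∀ x ∈ X, t • x ∈ X

theorem IsCone.zero_mem {E : Type*} [AddCommGroup E] [Module ℝ E] {X : Set E} (hX : IsCone X)
    (hne : X.Nonempty) : (0 : E) ∈ X := by
  obtain ⟨x, hx⟩ := hne
  simpa using hX 0 le_rfl x hx

theorem Set.BijOn.lipschitzOnWith_invFunOn {α β : Type*} [PseudoMetricSpace α] [Nonempty α]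
    [PseudoMetricSpace β] {f : α → β} {s : Set α} {t : Set β} (h : BijOn f s t) {c : ℝ}
    (hc : ∀ a ∈ s, ∀ b ∈ s, dist a b ≤ c * dist (f a) (f b)) :
    LipschitzOnWith (Real.toNNReal c) (Function.invFunOn f s) t := by
  refine LipschitzOnWith.of_dist_le' fun y hy y' hy' => ?_
  have key := hc _ (h.surjOn.mapsTo_invFunOn hy) _ (h.surjOn.mapsTo_invFunOn hy')
  rwa [h.surjOn.rightInvOn_invFunOn hy, h.surjOn.rightInvOn_invFunOn hy'] at key

section Zoom

variable {E F : Type*} [NormedAddCommGroup E] [NormedSpace ℝ E]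
  [NormedAddCommGroup F] [NormedSpace ℝ F] {f : E → F} {K : NNReal}

noncomputable def zoom (f : E → F) (t : ℝ) (x : E) : F := t • f (t⁻¹ • x)

theorem zoom_apply_zero (hf0 : f 0 = 0) (t : ℝ) : zoom f t 0 = 0 := by
  simp [zoom, hf0]

theorem zoom_zoom {G : Type*} [NormedAddCommGroup G] [NormedSpace ℝ G] (g : G → E) {t : ℝ}
    (ht : t ≠ 0) (y : G) : zoom f t (zoom g t y) = zoom (f ∘ g) t y := by
  simp [zoom, inv_smul_smul₀ ht]

theorem dist_zoom_le {S : Set E} (hf : LipschitzOnWith K f S) {t : ℝ} (ht : 0 < t) {a b : E}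
    (ha : t⁻¹ • a ∈ S) (hb : t⁻¹ • b ∈ S) :
    dist (zoom f t a) (zoom f t b) ≤ K * dist a b := by
  have hdist : dist (t⁻¹ • a) (t⁻¹ • b) = t⁻¹ * dist a b := by
    rw [dist_smul₀, norm_inv, Real.norm_of_nonneg ht.le]
  calc dist (zoom f t a) (zoom f t b) = t * dist (f (t⁻¹ • a)) (f (t⁻¹ • b)) := by
        rw [zoom, zoom, dist_smul₀, Real.norm_of_nonneg ht.le]
    _ ≤ t * (K * (t⁻¹ * dist a b)) := by
        gcongr
        exact hdist ▸ hf.dist_le_mul _ ha _ hb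
    _ = K * dist a b := by field_simp

variable {X : Set E} {ε : ℝ} {Y : Set F} {δ : ℝ}

theorem eventually_inv_smul_mem (hX : IsCone X) (hε : 0 < ε) {x : E} (hx : x ∈ X) :
    ∀ᶠ t : ℝ in atTop, 0 < t ∧ t⁻¹ • x ∈ {x ∈ X | ‖x‖ ≤ ε} := by
  filter_upwards [eventually_gt_atTop 0, eventually_ge_atTop (‖x‖ / ε)] with t ht htx
  refine ⟨ht, hX _ (inv_nonneg.2 ht.le) x hx, ?_⟩
  rw [norm_smul, norm_inv, Real.norm_of_nonneg ht.le, inv_mul_le_iff₀ ht]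
  rwa [div_le_iff₀ hε] at htx

theorem eventually_dist_zoom_le (hX : IsCone X) (hε : 0 < ε)
    (hf : LipschitzOnWith K f {x ∈ X | ‖x‖ ≤ ε}) {a b : E} (ha : a ∈ X) (hb : b ∈ X) :
    ∀ᶠ t : ℝ in atTop, dist (zoom f t a) (zoom f t b) ≤ K * dist a b := by
  filter_upwards [eventually_inv_smul_mem hX hε ha, eventually_inv_smul_mem hX hε hb]
    with t ⟨ht, hta⟩ ⟨_, htb⟩
  exact dist_zoom_le hf ht hta htb

noncomputable def zoomLimit (U : Ultrafilter ℝ) (f : E → F) (x : E) : F :=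
  limUnder (U : Filter ℝ) fun t => zoom f t x

variable [ProperSpace F] {U : Ultrafilter ℝ}

theorem tendsto_zoomLimit (hU : ↑U ≤ (atTop : Filter ℝ)) (hX : IsCone X) (hε : 0 < ε)
    (hf : LipschitzOnWith K f {x ∈ X | ‖x‖ ≤ ε}) (hf0 : f 0 = 0) {x : E} (hx : x ∈ X) :
    Tendsto (fun t => zoom f t x) U (𝓝 (zoomLimit U f x)) := by
  have hbound : ∀ᶠ t in (U : Filter ℝ), zoom f t x ∈ Metric.closedBall 0 (K * ‖x‖) := by
    filter_upwards [hU (eventually_dist_zoom_le hX hε hf hx (hX.zero_mem ⟨x, hx⟩))]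
      with t ht
    simpa [zoom_apply_zero hf0] using ht
  obtain ⟨L, -, hL⟩ := (isCompact_closedBall (0 : F) (K * ‖x‖)).ultrafilter_le_nhds
    (U.map fun t => zoom f t x) (le_principal_iff.2 hbound)
  exact tendsto_nhds_limUnder ⟨L, hL⟩

theorem lipschitzOnWith_zoomLimit (hU : ↑U ≤ (atTop : Filter ℝ)) (hX : IsCone X)
    (hε : 0 < ε) (hf : LipschitzOnWith K f {x ∈ X | ‖x‖ ≤ ε}) (hf0 : f 0 = 0) :
    LipschitzOnWith K (zoomLimit U f) X :=
  LipschitzOnWith.of_dist_le_mul fun _ ha _ hb =>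
    le_of_tendsto ((tendsto_zoomLimit hU hX hε hf hf0 ha).dist
      (tendsto_zoomLimit hU hX hε hf hf0 hb)) (hU (eventually_dist_zoom_le hX hε hf ha hb))

theorem mapsTo_zoomLimit (hU : ↑U ≤ (atTop : Filter ℝ)) (hX : IsCone X) (hε : 0 < ε)
    (hYclosed : IsClosed Y) (hY : IsCone Y) (hf : LipschitzOnWith K f {x ∈ X | ‖x‖ ≤ ε})
    (hf0 : f 0 = 0) (hfY : MapsTo f {x ∈ X | ‖x‖ ≤ ε} Y) : MapsTo (zoomLimit U f) X Y :=
  fun _ hx => hYclosed.mem_of_tendsto (tendsto_zoomLimit hU hX hε hf hf0 hx) <|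
    hU <| (eventually_inv_smul_mem hX hε hx).mono fun t ⟨ht, htx⟩ => hY t ht.le _ (hfY htx)

theorem leftInvOn_zoomLimit [ProperSpace E] (hU : ↑U ≤ (atTop : Filter ℝ))
    (hXclosed : IsClosed X) (hX : IsCone X) (hε : 0 < ε) (hY : IsCone Y) (hδ : 0 < δ)
    {g : F → E} {L : NNReal} (hf : LipschitzOnWith K f {x ∈ X | ‖x‖ ≤ ε}) (hf0 : f 0 = 0)
    (hg : LipschitzOnWith L g {y ∈ Y | ‖y‖ ≤ δ}) (hg0 : g 0 = 0)
    (hgX : MapsTo g {y ∈ Y | ‖y‖ ≤ δ} {x ∈ X | ‖x‖ ≤ ε})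
    (hfg : LeftInvOn f g {y ∈ Y | ‖y‖ ≤ δ}) :
    LeftInvOn (zoomLimit U f) (zoomLimit U g) Y := by
  intro y hy
  set x := zoomLimit U g y
  have hx : x ∈ X :=
    mapsTo_zoomLimit hU hY hδ hXclosed hX hg hg0 (hgX.mono_right (sep_subset _ _)) hy
  have hgy : Tendsto (fun t => zoom g t y) U (𝓝 x) := tendsto_zoomLimit hU hY hδ hg hg0 hy
  have hclose : ∀ᶠ t in (U : Filter ℝ), dist (zoom f t x) y ≤ K * dist x (zoom g t y) := by
    filter_upwards [hU (eventually_inv_smul_mem hX hε hx), hU (eventually_inv_smul_mem hY hδ hy)]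
      with t ⟨ht, htx⟩ ⟨_, hty⟩
    have hfg_t : zoom f t (zoom g t y) = y := by
      rw [zoom_zoom g ht.ne', zoom, Function.comp_apply, hfg hty, smul_inv_smul₀ ht.ne']
    have htgy : t⁻¹ • zoom g t y ∈ {x ∈ X | ‖x‖ ≤ ε} := by
      rw [zoom, inv_smul_smul₀ ht.ne']
      exact hgX hty
    simpa only [hfg_t] using dist_zoom_le hf ht htx htgy
  have hlim : Tendsto (fun t => zoom f t x) U (𝓝 y) := by
    rw [tendsto_iff_dist_tendsto_zero]
    refine squeeze_zero' (.of_forall fun _ => dist_nonneg) hclose ?_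
    simpa using ((tendsto_iff_dist_tendsto_zero.1 hgy).congr fun _ => dist_comm _ _).const_mul
      (K : ℝ)
  exact tendsto_nhds_unique (tendsto_zoomLimit hU hX hε hf hf0 hx) hlim

end Zoom

/-- closed cones (with vertex at the origin) that are outer bi-Lipschitz
homeomorphic as germs at their vertices are globally outer bi-Lipschitz homeomorphic. -/
theorem cones_biLipschitz_germ_implies_global {n m : ℕ}
    (X : Set (EuclideanSpace ℝ (Fin n))) (Y : Set (EuclideanSpace ℝ (Fin m)))
    (hXclosed : IsClosed X) (hYclosed : IsClosed Y)
    (hXcone : ∀ t : ℝ, 0 ≤ t → ∀ x ∈ X, t • x ∈ X)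
    (hYcone : ∀ t : ℝ, 0 ≤ t → ∀ y ∈ Y, t • y ∈ Y)
    (ε δ : ℝ) (hε : 0 < ε) (hδ : 0 < δ)
    (φ : EuclideanSpace ℝ (Fin n) → EuclideanSpace ℝ (Fin m))
    (hbij : Set.BijOn φ {x ∈ X | ‖x‖ ≤ ε} {y ∈ Y | ‖y‖ ≤ δ})
    (hφ0 : φ 0 = 0)
    (hlip : ∃ C > (0:ℝ), ∀ a ∈ {x ∈ X | ‖x‖ ≤ ε}, ∀ b ∈ {x ∈ X | ‖x‖ ≤ ε},
      dist (φ a) (φ b) ≤ C * dist a b)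
    (hlipinv : ∃ c > (0:ℝ), ∀ a ∈ {x ∈ X | ‖x‖ ≤ ε}, ∀ b ∈ {x ∈ X | ‖x‖ ≤ ε},
      dist a b ≤ c * dist (φ a) (φ b)) :
    ∃ Φ : EuclideanSpace ℝ (Fin n) → EuclideanSpace ℝ (Fin m),
      Set.BijOn Φ X Y ∧
      (∃ C > (0:ℝ), ∀ a ∈ X, ∀ b ∈ X, dist (Φ a) (Φ b) ≤ C * dist a b) ∧
      (∃ c > (0:ℝ), ∀ a ∈ X, ∀ b ∈ X, dist a b ≤ c * dist (Φ a) (Φ b)) := by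
  rcases X.eq_empty_or_nonempty with rfl | hXne
  · obtain rfl : Y = ∅ := eq_empty_of_forall_notMem fun y hy =>
      (hbij.surjOn ⟨IsCone.zero_mem hYcone ⟨y, hy⟩, by simpa using hδ.le⟩).elim
        fun _ h => h.1.1
    exact ⟨φ, bijOn_empty φ, ⟨1, one_pos, by simp⟩, ⟨1, one_pos, by simp⟩⟩
  obtain ⟨C, hC, hφC⟩ := hlip
  obtain ⟨c, hc, hφc⟩ := hlipinv
  set ψ := Function.invFunOn φ {x ∈ X | ‖x‖ ≤ ε}
  have h0 : (0 : EuclideanSpace ℝ (Fin n)) ∈ {x ∈ X | ‖x‖ ≤ ε} :=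
    ⟨IsCone.zero_mem hXcone hXne, by simpa using hε.le⟩
  have hφ : LipschitzOnWith (Real.toNNReal C) φ {x ∈ X | ‖x‖ ≤ ε} :=
    LipschitzOnWith.of_dist_le' hφC
  have hψ : LipschitzOnWith (Real.toNNReal c) ψ {y ∈ Y | ‖y‖ ≤ δ} :=
    hbij.lipschitzOnWith_invFunOn hφc
  have hψ0 : ψ 0 = 0 := by simpa only [hφ0] using hbij.injOn.leftInvOn_invFunOn h0
  set U := Ultrafilter.of (atTop : Filter ℝ)
  have hU : ↑U ≤ (atTop : Filter ℝ) := Ultrafilter.of_le _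
  have hinv : InvOn (zoomLimit U ψ) (zoomLimit U φ) X Y :=
    ⟨leftInvOn_zoomLimit hU hYclosed hYcone hδ hXcone hε hψ hψ0 hφ hφ0 hbij.mapsTo
        hbij.injOn.leftInvOn_invFunOn,
      leftInvOn_zoomLimit hU hXclosed hXcone hε hYcone hδ hφ hφ0 hψ hψ0
        hbij.surjOn.mapsTo_invFunOn hbij.surjOn.rightInvOn_invFunOn⟩
  have hΦY : MapsTo (zoomLimit U φ) X Y := mapsTo_zoomLimit hU hXcone hε hYclosed hYcone hφ hφ0
    (hbij.mapsTo.mono_right (sep_subset _ _))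
  have hΨX : MapsTo (zoomLimit U ψ) Y X := mapsTo_zoomLimit hU hYcone hδ hXclosed hXcone hψ hψ0
    (hbij.surjOn.mapsTo_invFunOn.mono_right (sep_subset _ _))
  refine ⟨zoomLimit U φ, hinv.bijOn hΦY hΨX, ⟨C, hC, fun a ha b hb => ?_⟩,
    ⟨c, hc, fun a ha b hb => ?_⟩⟩
  · simpa [hC.le] using (lipschitzOnWith_zoomLimit hU hXcone hε hφ hφ0).dist_le_mul a ha b hb
  · simpa [hc.le, hinv.1 ha, hinv.1 hb] using
      (lipschitzOnWith_zoomLimit hU hYcone hδ hψ hψ0).dist_le_mul _ (hΦY ha) _ (hΦY hb)
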